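/- arXiv:1105.0728 — 5 statements merged into one kernel-verified Lean document; each statement's English description precedes it below -/
import Mathlib

section
/- Let c ∈ ℝ^p and let z be the Euclidean projection of the componentwise absolute value |c| onto the ℓ₁-ball of radius η. Then the vector y* with components y*_i = sign(c_i) z_i is the Euclidean projection of c onto the ℓ₁-ball of radius η. -/
/-!
Reflecting coordinates into the nonnegative orthant is distance-nonincreasing, since
`||c i| - |w i|| ≤ |c i - w i|`, and it maps the ℓ₁-ball onto itself. Hence for any `w` in
the ball, `‖c - y*‖ ≤ ‖|c| - z‖ ≤ ‖|c| - |w|‖ ≤ ‖c - w‖`; the first inequality is an equality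
in every coordinate with `c i ≠ 0`, while for `c i = 0` the coordinate of `y*` vanishes.
-/

namespace Real

theorem abs_sign_mul_le (x y : ℝ) : |sign x * y| ≤ |y| := by
  rcases sign_apply_eq x with h | h | h <;> simp [h]

theorem abs_sub_sign_mul_le (x y : ℝ) : |x - sign x * y| ≤ |(|x| - y)| := by
  rcases lt_trichotomy x 0 with hx | rfl | hx
  · rw [sign_of_neg hx, abs_of_neg hx, ← abs_neg]
    ring_nf
    exact le_rfl
  · simp
  · rw [sign_of_pos hx, abs_of_pos hx, one_mul]

end Real

theorem EuclideanSpace.norm_le_norm_of_abs_le {ι : Type*} [Fintype ι]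
    {a b : EuclideanSpace ℝ ι} (h : ∀ i, |a i| ≤ |b i|) : ‖a‖ ≤ ‖b‖ := by
  rw [EuclideanSpace.norm_eq, EuclideanSpace.norm_eq]
  gcongr with i
  simpa only [Real.norm_eq_abs] using h i

theorem stmt4_general (p : ℕ) (c : EuclideanSpace ℝ (Fin p)) (η : ℝ)
    (z : EuclideanSpace ℝ (Fin p))
    (hzmem : ∑ i, |z i| ≤ η)
    (hzproj : ∀ w : EuclideanSpace ℝ (Fin p), (∑ i, |w i|) ≤ η →
      ‖(show EuclideanSpace ℝ (Fin p) from WithLp.toLp 2 fun i => |c i|) - z‖ ≤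
      ‖(show EuclideanSpace ℝ (Fin p) from WithLp.toLp 2 fun i => |c i|) - w‖) :
    let ystar : EuclideanSpace ℝ (Fin p) := WithLp.toLp 2 fun i => Real.sign (c i) * z i
    (∑ i, |ystar i| ≤ η) ∧
      ∀ w : EuclideanSpace ℝ (Fin p), (∑ i, |w i|) ≤ η → ‖c - ystar‖ ≤ ‖c - w‖ := by
  intro ystar
  refine ⟨(Finset.sum_le_sum fun i _ => Real.abs_sign_mul_le (c i) (z i)).trans hzmem,
    fun w hw => ?_⟩
  let absC : EuclideanSpace ℝ (Fin p) := WithLp.toLp 2 fun i => |c i|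
  let absW : EuclideanSpace ℝ (Fin p) := WithLp.toLp 2 fun i => |w i|
  calc ‖c - ystar‖ ≤ ‖absC - z‖ :=
        EuclideanSpace.norm_le_norm_of_abs_le fun i => Real.abs_sub_sign_mul_le (c i) (z i)
    _ ≤ ‖absC - absW‖ := hzproj absW (by simpa only [absW, abs_abs] using hw)
    _ ≤ ‖c - w‖ :=
        EuclideanSpace.norm_le_norm_of_abs_le fun i => abs_abs_sub_abs_le_abs_sub (c i) (w i)

/-- If `z` is the Euclidean projection of the componentwise absolute value `|c|`
onto the ℓ₁-ball of radius `η` (with nonnegative entries), then the vector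
`y*` with `y*_i = sign(c_i) z_i` is the Euclidean projection of `c` onto the
ℓ₁-ball of radius `η`. -/
theorem stmt4 (p : ℕ) (c : EuclideanSpace ℝ (Fin p)) (η : ℝ) (hη : 0 ≤ η)
    (z : EuclideanSpace ℝ (Fin p)) (hznn : ∀ i, 0 ≤ z i)
    (hzmem : ∑ i, |z i| ≤ η)
    (hzproj : ∀ w : EuclideanSpace ℝ (Fin p), (∑ i, |w i|) ≤ η →
      ‖(show EuclideanSpace ℝ (Fin p) from WithLp.toLp 2 fun i => |c i|) - z‖ ≤
      ‖(show EuclideanSpace ℝ (Fin p) from WithLp.toLp 2 fun i => |c i|) - w‖) :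
    let ystar : EuclideanSpace ℝ (Fin p) := WithLp.toLp 2 fun i => Real.sign (c i) * z i
    (∑ i, |ystar i| ≤ η) ∧
      ∀ w : EuclideanSpace ℝ (Fin p), (∑ i, |w i|) ≤ η → ‖c - ystar‖ ≤ ‖c - w‖ :=
  stmt4_general p c η z hzmem hzproj
end

section
/- Let f: ℝ^m × ℝ^M → ℝ be convex and differentiable in y with ∇_y f Lipschitz in y, let g: ℝ^M → ℝ be convex, F(x,y) = f(x,y) + g(y), and for ρ > 0 define L_ρ(x,y,ȳ) = f(x,y) + ∇_y f(x,y)^T(ȳ - y) + (1/(2ρ))‖ȳ - y‖² + g(ȳ). Suppose q = argmin_ȳ L_ρ(x,y,ȳ) satisfies F(x,q) ≤ L_ρ(x,y,q). Then for all (x̄, ȳ): 2ρ(F(x̄,ȳ) - F(x,q)) ≥ ‖q - ȳ‖² - ‖y - ȳ‖² + 2ρ(x̄ - x)^T ∇_x f(x,y). -/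
/-!
Joint convexity of `f` gives the first-order bound
`f(x̄,ȳ) ≥ f(x,y) + ⟪∇ₓf(x,y), x̄ - x⟫ + ⟪∇_y f(x,y), ȳ - y⟫`, even though only the two partial
gradients are assumed to exist. The objective `L_ρ(x,y,·)` is `1/ρ`-strongly convex, so its
minimiser `q` satisfies `L_ρ(x,y,q) + ‖ȳ - q‖²/(2ρ) ≤ L_ρ(x,y,ȳ)`. Adding both inequalities to
the descent condition `F(x,q) ≤ L_ρ(x,y,q)` and multiplying by `2ρ` gives the claim.
-/

open RealInnerProductSpace Set Filter Topology

theorem HasGradientAt.hasLineDerivAt {F : Type*} [NormedAddCommGroup F] [InnerProductSpace ℝ F]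
    [CompleteSpace F] {φ : F → ℝ} {G p : F} (h : HasGradientAt φ G p) (v : F) :
    HasLineDerivAt ℝ φ ⟪G, v⟫ p v := by
  simpa using h.hasFDerivAt.hasLineDerivAt v

/-- `p + t • b` is the midpoint of `p - 2t • a` and `p + 2t • (a + b)`; this convexity inequality,
which only involves the lines through `p` along `a` and `b`, is differentiated at `t = 0⁺`. -/
theorem ConvexOn.add_add_le_of_hasLineDerivAt {E : Type*} [AddCommGroup E] [Module ℝ E]
    {φ : E → ℝ} (hφ : ConvexOn ℝ univ φ) {p a b : E} {da db : ℝ}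
    (ha : HasLineDerivAt ℝ φ da p a) (hb : HasLineDerivAt ℝ φ db p b) :
    φ p + da + db ≤ φ (p + (a + b)) := by
  let k : ℝ → ℝ := fun t ↦ 2 * φ (p + t • b) - φ (p + t • ((-2 : ℝ) • a)) -
    (φ p + t * (2 * φ (p + (a + b)) - 2 * φ p))
  have hk : HasDerivAt k (2 * db - (-2 : ℝ) • da - (2 * φ (p + (a + b)) - 2 * φ p)) 0 :=
    ((hb.const_mul 2).sub (ha.smul (-2 : ℝ))).sub ((hasDerivAt_mul_const _).const_add _)
  have hmax : IsLocalMaxOn k (Ici 0) 0 := by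
    filter_upwards [inter_mem_nhdsWithin (Ici 0) (Iio_mem_nhds (by norm_num : (0 : ℝ) < 1 / 2))]
      with t ⟨ht0, ht1⟩
    simp only [mem_Ici, mem_Iio] at ht0 ht1
    have hmid := hφ.2 (mem_univ (p + t • ((-2 : ℝ) • a))) (mem_univ (p + (2 * t) • (a + b)))
      (by norm_num : (0 : ℝ) ≤ 1 / 2) (by norm_num : (0 : ℝ) ≤ 1 / 2) (by norm_num)
    have hsec := hφ.2 (mem_univ p) (mem_univ (p + (a + b))) (by linarith : 0 ≤ 1 - 2 * t)
      (by linarith : 0 ≤ 2 * t) (by ring)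
    rw [show (1 / 2 : ℝ) • (p + t • ((-2 : ℝ) • a)) + (1 / 2 : ℝ) • (p + (2 * t) • (a + b)) =
      p + t • b by module] at hmid
    rw [show (1 - 2 * t) • p + (2 * t) • (p + (a + b)) = p + (2 * t) • (a + b) by module] at hsec
    simp only [smul_eq_mul] at hmid hsec
    simp only [k, zero_smul, add_zero, zero_mul]
    linarith
  have hseg : segment ℝ (0 : ℝ) (0 + 1) ⊆ Ici 0 := by
    rw [segment_eq_Icc (by norm_num)]; exact Icc_subset_Ici_self
  have := hmax.hasFDerivWithinAt_nonpos hk.hasDerivWithinAt.hasFDerivWithinAt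
    (mem_posTangentConeAt_of_segment_subset hseg)
  simp only [ContinuousLinearMap.toSpanSingleton_apply, smul_eq_mul, one_mul] at this
  linarith

theorem ConvexOn.add_inner_add_inner_le_of_hasGradientAt {E F : Type*}
    [NormedAddCommGroup E] [InnerProductSpace ℝ E] [CompleteSpace E]
    [NormedAddCommGroup F] [InnerProductSpace ℝ F] [CompleteSpace F]
    {f : E → F → ℝ} (hf : ConvexOn ℝ univ fun p : E × F ↦ f p.1 p.2)
    {x : E} {y : F} {gx : E} {gy : F}
    (hx : HasGradientAt (fun x' ↦ f x' y) gx x) (hy : HasGradientAt (f x) gy y) (xb : E) (yb : F) :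
    f x y + ⟪gx, xb - x⟫ + ⟪gy, yb - y⟫ ≤ f xb yb := by
  have hx' : HasLineDerivAt ℝ (fun p : E × F ↦ f p.1 p.2) ⟪gx, xb - x⟫ (x, y) (xb - x, 0) := by
    simpa [HasLineDerivAt] using hx.hasLineDerivAt (xb - x)
  have hy' : HasLineDerivAt ℝ (fun p : E × F ↦ f p.1 p.2) ⟪gy, yb - y⟫ (x, y) (0, yb - y) := by
    simpa [HasLineDerivAt] using hy.hasLineDerivAt (yb - y)
  simpa using hf.add_add_le_of_hasLineDerivAt hx' hy'

theorem StrongConvexOn.add_sq_le_of_isMinOn {E : Type*} [NormedAddCommGroup E] [NormedSpace ℝ E]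
    {ψ : E → ℝ} {m : ℝ} (hψ : StrongConvexOn univ m ψ) {q : E} (hq : IsMinOn ψ univ q) (z : E) :
    ψ q + m / 2 * ‖z - q‖ ^ 2 ≤ ψ z := by
  have hseg : ∀ t ∈ Ioo (0 : ℝ) 1, ψ q + (1 - t) * (m / 2 * ‖z - q‖ ^ 2) ≤ ψ z := by
    rintro t ⟨ht0, ht1⟩
    have hconv := hψ.2 (mem_univ q) (mem_univ z) (by linarith : 0 ≤ 1 - t) ht0.le (by ring)
    have hmin := isMinOn_univ_iff.mp hq ((1 - t) • q + t • z)
    simp only [smul_eq_mul, norm_sub_rev q z] at hconv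
    have : t * (ψ q + (1 - t) * (m / 2 * ‖z - q‖ ^ 2)) ≤ t * ψ z := by linarith
    exact le_of_mul_le_mul_left this ht0
  have hlim : Tendsto (fun t : ℝ ↦ ψ q + (1 - t) * (m / 2 * ‖z - q‖ ^ 2)) (𝓝[>] 0)
      (𝓝 (ψ q + (1 - 0) * (m / 2 * ‖z - q‖ ^ 2))) :=
    (Continuous.tendsto (by fun_prop) 0).mono_left nhdsWithin_le_nhds
  rw [sub_zero, one_mul] at hlim
  refine le_of_tendsto hlim ?_
  filter_upwards [Ioo_mem_nhdsGT one_pos] with t ht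
  exact hseg t ht

theorem ConvexOn.strongConvexOn_add_inner_add_norm_sub_sq {E : Type*} [NormedAddCommGroup E]
    [InnerProductSpace ℝ E] {g : E → ℝ} (hg : ConvexOn ℝ univ g) (c : ℝ) (G y : E) (ρ : ℝ) :
    StrongConvexOn univ ρ⁻¹ fun w ↦ c + ⟪G, w - y⟫ + 1 / (2 * ρ) * ‖w - y‖ ^ 2 + g w := by
  rw [strongConvexOn_iff_convex]
  have hsplit : (fun w ↦ c + ⟪G, w - y⟫ + 1 / (2 * ρ) * ‖w - y‖ ^ 2 + g w - ρ⁻¹ / 2 * ‖w‖ ^ 2) =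
      fun w ↦ (innerₛₗ ℝ (G - ρ⁻¹ • y) w + (c - ⟪G, y⟫ + ‖y‖ ^ 2 / (2 * ρ))) + g w := by
    funext w
    rw [norm_sub_sq_real, innerₛₗ_apply_apply, inner_sub_left, inner_sub_right,
      real_inner_smul_left, real_inner_comm y w]
    field_simp
    ring
  rw [hsplit]
  exact ((LinearMap.convexOn _ convex_univ).add_const _).add hg

theorem stmt6_general (m M : ℕ)
    (f : EuclideanSpace ℝ (Fin m) → EuclideanSpace ℝ (Fin M) → ℝ)
    (g : EuclideanSpace ℝ (Fin M) → ℝ)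
    (gx : EuclideanSpace ℝ (Fin m) → EuclideanSpace ℝ (Fin M) → EuclideanSpace ℝ (Fin m))
    (gy : EuclideanSpace ℝ (Fin m) → EuclideanSpace ℝ (Fin M) → EuclideanSpace ℝ (Fin M))
    (hf : ConvexOn ℝ Set.univ (fun q : EuclideanSpace ℝ (Fin m) × EuclideanSpace ℝ (Fin M) => f q.1 q.2))
    (hg : ConvexOn ℝ Set.univ g)
    (hgx : ∀ x y, HasGradientAt (fun x' => f x' y) (gx x y) x)
    (hgy : ∀ x y, HasGradientAt (fun y' => f x y') (gy x y) y)
    (ρ : ℝ) (hρ : 0 < ρ)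
    (x : EuclideanSpace ℝ (Fin m)) (y q : EuclideanSpace ℝ (Fin M))
    (hq : ∀ w, f x y + ⟪gy x y, q - y⟫ + (1 / (2 * ρ)) * ‖q - y‖ ^ 2 + g q ≤
              f x y + ⟪gy x y, w - y⟫ + (1 / (2 * ρ)) * ‖w - y‖ ^ 2 + g w)
    (hdesc : f x q + g q ≤
      f x y + ⟪gy x y, q - y⟫ + (1 / (2 * ρ)) * ‖q - y‖ ^ 2 + g q) :
    ∀ (xb : EuclideanSpace ℝ (Fin m)) (yb : EuclideanSpace ℝ (Fin M)),
      2 * ρ * ((f xb yb + g yb) - (f x q + g q)) ≥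
        ‖q - yb‖ ^ 2 - ‖y - yb‖ ^ 2 + 2 * ρ * ⟪xb - x, gx x y⟫ := by
  intro xb yb
  have hfirst := hf.add_inner_add_inner_le_of_hasGradientAt (hgx x y) (hgy x y) xb yb
  have hprox := (hg.strongConvexOn_add_inner_add_norm_sub_sq (f x y) (gy x y) y ρ
    ).add_sq_le_of_isMinOn (isMinOn_univ_iff.mpr hq) yb
  rw [show ρ⁻¹ / 2 = 1 / (2 * ρ) by ring, norm_sub_rev yb q, norm_sub_rev yb y] at hprox
  calc ‖q - yb‖ ^ 2 - ‖y - yb‖ ^ 2 + 2 * ρ * ⟪xb - x, gx x y⟫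
      = 2 * ρ * (1 / (2 * ρ) * (‖q - yb‖ ^ 2 - ‖y - yb‖ ^ 2) + ⟪gx x y, xb - x⟫) := by
        rw [real_inner_comm]; field_simp
    _ ≤ 2 * ρ * ((f xb yb + g yb) - (f x q + g q)) := by gcongr; linarith

/-- First part of the descent lemma (Lemma 3.1) for partial linearization:
if `q` minimizes the partial linearization `L_ρ(x,y,·)` and the descent condition
`F(x,q) ≤ L_ρ(x,y,q)` holds, then for all `(x̄,ȳ)`,
`2ρ(F(x̄,ȳ) - F(x,q)) ≥ ‖q - ȳ‖² - ‖y - ȳ‖² + 2ρ⟪x̄ - x, ∇ₓf(x,y)⟫`. -/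
theorem stmt6 (m M : ℕ)
    (f : EuclideanSpace ℝ (Fin m) → EuclideanSpace ℝ (Fin M) → ℝ)
    (g : EuclideanSpace ℝ (Fin M) → ℝ)
    (gx : EuclideanSpace ℝ (Fin m) → EuclideanSpace ℝ (Fin M) → EuclideanSpace ℝ (Fin m))
    (gy : EuclideanSpace ℝ (Fin m) → EuclideanSpace ℝ (Fin M) → EuclideanSpace ℝ (Fin M))
    (hf : ConvexOn ℝ Set.univ (fun q : EuclideanSpace ℝ (Fin m) × EuclideanSpace ℝ (Fin M) => f q.1 q.2))
    (hg : ConvexOn ℝ Set.univ g)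
    (hgx : ∀ x y, HasGradientAt (fun x' => f x' y) (gx x y) x)
    (hgy : ∀ x y, HasGradientAt (fun y' => f x y') (gy x y) y)
    (L : ℝ) (hL : 0 < L)
    (hLip : ∀ x y z, ‖gy x y - gy x z‖ ≤ L * ‖y - z‖)
    (ρ : ℝ) (hρ : 0 < ρ)
    (x : EuclideanSpace ℝ (Fin m)) (y q : EuclideanSpace ℝ (Fin M))
    (hq : ∀ w, f x y + ⟪gy x y, q - y⟫ + (1 / (2 * ρ)) * ‖q - y‖ ^ 2 + g q ≤
              f x y + ⟪gy x y, w - y⟫ + (1 / (2 * ρ)) * ‖w - y‖ ^ 2 + g w)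
    (hdesc : f x q + g q ≤
      f x y + ⟪gy x y, q - y⟫ + (1 / (2 * ρ)) * ‖q - y‖ ^ 2 + g q) :
    ∀ (xb : EuclideanSpace ℝ (Fin m)) (yb : EuclideanSpace ℝ (Fin M)),
      2 * ρ * ((f xb yb + g yb) - (f x q + g q)) ≥
        ‖q - yb‖ ^ 2 - ‖y - yb‖ ^ 2 + 2 * ρ * ⟪xb - x, gx x y⟫ :=
  stmt6_general m M f g gx gy hf hg hgx hgy ρ hρ x y q hq hdesc
end

section
/- Let f(x,y) be convex with ∇_y f Lipschitz in y with constant L, g convex, F = f + g, and 0 < ρ ≤ 1/L. Consider the iteration: x^{k+1} = argmin_x f(x, ȳ^k); ȳ^{k+1} = argmin_y [ ∇_y f(x^{k+1}, ȳ^k)^T y + (1/(2ρ))‖y - ȳ^k‖² + g(y) ] (ISTA with partial linearization). Then for every k ≥ 1, F(x^k, ȳ^k) - F(x*, y*) ≤ ‖ȳ^0 - y*‖² / (2ρk), where (x*, y*) minimizes F. -/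
/-!
Every step satisfies the basic proximal-gradient inequality: the descent lemma for the
`L`-smooth map `y ↦ f (x^{k+1}) y` (with `ρ L ≤ 1`) together with the `1/ρ`-strong convexity
of the prox objective gives, for every `w`,
`F(x^{k+1}, ȳ^{k+1}) ≤ f(x^{k+1}, ȳ^k) + ⟪∇_y f(x^{k+1}, ȳ^k), w - ȳ^k⟫ + g w
  + (‖w - ȳ^k‖² - ‖w - ȳ^{k+1}‖²) / (2ρ)`.
With `w = ȳ^k` and the minimality of `x^{k+1}` this makes `F` decrease along the iterates.
With `w = y*`, joint convexity of `f` and `∇_x f(x^{k+1}, ȳ^k) = 0` bound the right-hand side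
by `F(x*, y*)` plus a telescoping difference of squared distances to `y*`; summing these
`k` inequalities and using the monotonicity yields the `O(1/k)` bound.
-/

open RealInnerProductSpace Filter Topology Set

section Convex

variable {E : Type*} [NormedAddCommGroup E] [NormedSpace ℝ E]

theorem ConvexOn.apply_add_fderiv_sub_le {φ : E → ℝ} {s : Set E} (hφ : ConvexOn ℝ s φ) {x y : E}
    (hx : x ∈ s) (hy : y ∈ s) {D : E →L[ℝ] ℝ} (hD : HasFDerivAt φ D x) :
    φ x + D (y - x) ≤ φ y := by
  have hline : HasDerivAt (φ ∘ AffineMap.lineMap (k := ℝ) x y) (D (y - x)) 0 :=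
    HasFDerivAt.comp_hasDerivAt (0 : ℝ) (by simpa using hD) AffineMap.hasDerivAt_lineMap
  have := (hφ.comp_affineMap (AffineMap.lineMap x y)).le_slope_of_hasDerivAt
    (by simpa using hx) (by simpa using hy) zero_lt_one hline
  simp only [slope_def_field, Function.comp_apply, AffineMap.lineMap_apply_zero,
    AffineMap.lineMap_apply_one, sub_zero, div_one] at this
  linarith

theorem StrongConvexOn.apply_add_sq_norm_sub_le_of_isMinOn {f : E → ℝ} {s : Set E} {m : ℝ}
    {u w : E} (hf : StrongConvexOn s m f) (hu : IsMinOn f s u) (hus : u ∈ s) (hws : w ∈ s) :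
    f u + m / 2 * ‖w - u‖ ^ 2 ≤ f w := by
  have hsegment : ∀ t ∈ Ioc (0 : ℝ) 1, f u ≤ f w - (1 - t) * (m / 2 * ‖w - u‖ ^ 2) := by
    rintro t ⟨ht0, ht1⟩
    have hconv := hf.2 hus hws (sub_nonneg.2 ht1) ht0.le (sub_add_cancel 1 t)
    have hmin : f u ≤ f _ := hu (hf.1 hus hws (sub_nonneg.2 ht1) ht0.le (sub_add_cancel 1 t))
    rw [norm_sub_rev] at hconv
    simp only [smul_eq_mul] at hconv
    refine le_of_mul_le_mul_left ?_ ht0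
    linarith
  have hlim : Tendsto (fun t : ℝ => f w - (1 - t) * (m / 2 * ‖w - u‖ ^ 2)) (𝓝[>] 0)
      (𝓝 (f w - m / 2 * ‖w - u‖ ^ 2)) := by
    have hcont : Continuous (fun t : ℝ => f w - (1 - t) * (m / 2 * ‖w - u‖ ^ 2)) := by
      fun_prop
    exact (hcont.tendsto' 0 _ (by simp)).mono_left nhdsWithin_le_nhds
  have := ge_of_tendsto hlim (by filter_upwards [Ioc_mem_nhdsGT zero_lt_one] using hsegment)
  linarith

end Convex

section InnerProduct

variable {F : Type*} [NormedAddCommGroup F] [InnerProductSpace ℝ F]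

noncomputable def proxGradObjective (g : F → ℝ) (c y₀ : F) (ρ : ℝ) (w : F) : ℝ :=
  ⟪c, w - y₀⟫ + 1 / (2 * ρ) * ‖w - y₀‖ ^ 2 + g w

theorem ConvexOn.strongConvexOn_proxGradObjective {g : F → ℝ} {s : Set F} (hg : ConvexOn ℝ s g)
    (c y₀ : F) (ρ : ℝ) : StrongConvexOn s ρ⁻¹ (proxGradObjective g c y₀ ρ) := by
  have hsplit : (fun w => proxGradObjective g c y₀ ρ w - ρ⁻¹ / 2 * ‖w‖ ^ 2)
      = g + ⇑(innerₛₗ ℝ (c - ρ⁻¹ • y₀)) + fun _ => 1 / (2 * ρ) * ‖y₀‖ ^ 2 - ⟪c, y₀⟫ := by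
    ext w
    simp only [proxGradObjective, Pi.add_apply, innerₛₗ_apply_apply, norm_sub_sq_real,
      inner_sub_left, inner_sub_right, real_inner_smul_left, real_inner_comm y₀ w]
    ring
  rw [strongConvexOn_iff_convex, hsplit]
  exact (hg.add ((innerₛₗ ℝ (c - ρ⁻¹ • y₀)).convexOn hg.1)).add_const _

variable [CompleteSpace F]

theorem le_add_inner_add_sq_norm_of_lipschitz_gradient {φ : F → ℝ} {G : F → F} {L : ℝ}
    (hG : ∀ y, HasGradientAt φ (G y) y) (hLip : ∀ y z, ‖G y - G z‖ ≤ L * ‖y - z‖) (y z : F) :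
    φ z ≤ φ y + ⟪G y, z - y⟫ + L / 2 * ‖z - y‖ ^ 2 := by
  set d := z - y
  set ψ : ℝ → ℝ := fun t => φ (y + t • d) - t * ⟪G y, d⟫ - L / 2 * t ^ 2 * ‖d‖ ^ 2
  have hψ : ∀ t, HasDerivAt ψ (⟪G (y + t • d), d⟫ - ⟪G y, d⟫ - L * t * ‖d‖ ^ 2) t := by
    intro t
    have hline : HasDerivAt (fun s : ℝ => y + s • d) d t := by
      simpa using ((hasDerivAt_id t).smul_const d).const_add y
    have hφ := (hG (y + t • d)).hasFDerivAt.comp_hasDerivAt t hline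
    simp only [Function.comp_def, InnerProductSpace.toDual_apply_apply] at hφ
    have h : HasDerivAt ψ _ t := (hφ.sub ((hasDerivAt_id t).mul_const ⟪G y, d⟫)).sub
      (((hasDerivAt_pow 2 t).const_mul (L / 2)).mul_const (‖d‖ ^ 2))
    convert h using 1
    push_cast
    ring
  have hanti : AntitoneOn ψ (Ici 0) := by
    refine antitoneOn_of_hasDerivWithinAt_nonpos (convex_Ici 0)
      (fun t _ => (hψ t).continuousAt.continuousWithinAt) (fun t _ => (hψ t).hasDerivWithinAt) ?_
    intro t ht
    rw [interior_Ici] at ht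
    calc ⟪G (y + t • d), d⟫ - ⟪G y, d⟫ - L * t * ‖d‖ ^ 2
        = ⟪G (y + t • d) - G y, d⟫ - L * t * ‖d‖ ^ 2 := by rw [inner_sub_left]
      _ ≤ L * ‖(y + t • d) - y‖ * ‖d‖ - L * t * ‖d‖ ^ 2 := by
          gcongr
          exact (real_inner_le_norm _ _).trans
            (mul_le_mul_of_nonneg_right (hLip _ _) (norm_nonneg d))
      _ = 0 := by
          rw [add_sub_cancel_left, norm_smul, Real.norm_of_nonneg (le_of_lt ht)]; ring
  have hψ₀ : ψ 0 = φ y := by simp [ψ]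
  have hψ₁ : ψ 1 = φ z - ⟪G y, z - y⟫ - L / 2 * ‖z - y‖ ^ 2 := by simp [ψ, d]
  linarith [hanti (mem_Ici.2 le_rfl) (mem_Ici.2 zero_le_one) zero_le_one]

theorem apply_add_le_of_isMinOn_proxGradObjective {φ g : F → ℝ} {G : F → F} {L ρ : ℝ}
    (hG : ∀ y, HasGradientAt φ (G y) y) (hLip : ∀ y z, ‖G y - G z‖ ≤ L * ‖y - z‖)
    (hg : ConvexOn ℝ univ g) (hρ : 0 < ρ) (hρL : ρ * L ≤ 1) {y₀ y₁ : F}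
    (hy₁ : IsMinOn (proxGradObjective g (G y₀) y₀ ρ) univ y₁) (w : F) :
    φ y₁ + g y₁ ≤ φ y₀ + ⟪G y₀, w - y₀⟫ + g w + 1 / (2 * ρ) * (‖w - y₀‖ ^ 2 - ‖w - y₁‖ ^ 2) := by
  have hdescent := le_add_inner_add_sq_norm_of_lipschitz_gradient hG hLip y₀ y₁
  have hstrong := hg.strongConvexOn_proxGradObjective (G y₀) y₀ ρ
  have hprox := hstrong.apply_add_sq_norm_sub_le_of_isMinOn hy₁ (mem_univ y₁) (mem_univ w)
  have hmodulus : ρ⁻¹ / 2 = 1 / (2 * ρ) := by ring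
  have hsmooth : L / 2 ≤ 1 / (2 * ρ) := by
    rw [le_div_iff₀ (by positivity)]
    linarith
  have hquad := mul_le_mul_of_nonneg_right hsmooth (sq_nonneg ‖y₁ - y₀‖)
  rw [hmodulus] at hprox
  simp only [proxGradObjective] at hprox
  linarith

theorem ConvexOn.apply_add_inner_le_of_forall_le_fst {E : Type*} [NormedAddCommGroup E]
    [NormedSpace ℝ E] {Φ : E × F → ℝ}
    (hΦ : ConvexOn ℝ univ Φ) {p : E × F} (hΦp : DifferentiableAt ℝ Φ p)
    (hmin : ∀ x, Φ p ≤ Φ (x, p.2)) {c : F} (hc : HasGradientAt (fun y => Φ (p.1, y)) c p.2)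
    (q : E × F) : Φ p + ⟪c, q.2 - p.2⟫ ≤ Φ q := by
  set D := fderiv ℝ Φ p
  have hfst : D.comp (.inl ℝ E F) = 0 := by
    have h := hΦp.hasFDerivAt.comp p.1 (hasFDerivAt_prodMk_left (𝕜 := ℝ) p.1 p.2)
    rw [← h.fderiv]
    exact IsLocalMin.fderiv_eq_zero (.of_forall hmin)
  have hsnd : D.comp (.inr ℝ E F) = InnerProductSpace.toDual ℝ F c :=
    (hΦp.hasFDerivAt.comp p.2 (hasFDerivAt_prodMk_right p.1 p.2)).unique hc.hasFDerivAt
  have hD : D (q - p) = ⟪c, q.2 - p.2⟫ := by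
    rw [← D.comp_inl_add_comp_inr, hfst, hsnd]
    simp
  have := hΦ.apply_add_fderiv_sub_le (mem_univ p) (mem_univ q) hΦp.hasFDerivAt
  rwa [hD] at this

end InnerProduct

theorem natCast_mul_le_sub_of_le_sub {a d : ℕ → ℝ} (ha : ∀ k, a (k + 1) ≤ a k)
    (had : ∀ k, a (k + 1) ≤ d k - d (k + 1)) (k : ℕ) : k * a k ≤ d 0 - d k := by
  induction k with
  | zero => simp
  | succ k ih =>
    push_cast
    have := mul_le_mul_of_nonneg_left (ha k) (Nat.cast_nonneg (α := ℝ) k)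
    linarith [had k]

theorem stmt8_general (m M : ℕ)
    (f : EuclideanSpace ℝ (Fin m) → EuclideanSpace ℝ (Fin M) → ℝ)
    (g : EuclideanSpace ℝ (Fin M) → ℝ)
    (gy : EuclideanSpace ℝ (Fin m) → EuclideanSpace ℝ (Fin M) → EuclideanSpace ℝ (Fin M))
    (hf : ConvexOn ℝ Set.univ (fun q : EuclideanSpace ℝ (Fin m) × EuclideanSpace ℝ (Fin M) => f q.1 q.2))
    (hfd : Differentiable ℝ (fun q : EuclideanSpace ℝ (Fin m) × EuclideanSpace ℝ (Fin M) => f q.1 q.2))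
    (hg : ConvexOn ℝ Set.univ g)
    (hgy : ∀ x y, HasGradientAt (fun y' => f x y') (gy x y) y)
    (L : ℝ) (hL : 0 < L)
    (hLip : ∀ x y z, ‖gy x y - gy x z‖ ≤ L * ‖y - z‖)
    (ρ : ℝ) (hρ : 0 < ρ) (hρL : ρ ≤ 1 / L)
    (x : ℕ → EuclideanSpace ℝ (Fin m)) (yb : ℕ → EuclideanSpace ℝ (Fin M))
    (hx : ∀ k x', f (x (k + 1)) (yb k) ≤ f x' (yb k))
    (hy : ∀ k w,
      ⟪gy (x (k + 1)) (yb k), yb (k + 1) - yb k⟫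
          + (1 / (2 * ρ)) * ‖yb (k + 1) - yb k‖ ^ 2 + g (yb (k + 1)) ≤
        ⟪gy (x (k + 1)) (yb k), w - yb k⟫ + (1 / (2 * ρ)) * ‖w - yb k‖ ^ 2 + g w)
    (xs : EuclideanSpace ℝ (Fin m)) (ys : EuclideanSpace ℝ (Fin M)) :
    ∀ k : ℕ, 1 ≤ k →
      (f (x k) (yb k) + g (yb k)) - (f xs ys + g ys) ≤
        ‖yb 0 - ys‖ ^ 2 / (2 * ρ * k) := by
  set gap : ℕ → ℝ := fun k => f (x k) (yb k) + g (yb k) - (f xs ys + g ys)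
  set potential : ℕ → ℝ := fun k => 1 / (2 * ρ) * ‖yb k - ys‖ ^ 2
  have hstep k := apply_add_le_of_isMinOn_proxGradObjective (hgy (x (k + 1))) (hLip (x (k + 1)))
    hg hρ ((le_div_iff₀ hL).1 hρL) (fun w _ => hy k w)
  have hdecrease : ∀ k, gap (k + 1) ≤ gap k := by
    intro k
    have hprox := hstep k (yb k)
    rw [sub_self, inner_zero_right, norm_zero] at hprox
    have hmin := hx k (x k)
    have hnonneg : 0 ≤ 1 / (2 * ρ) * ‖yb k - yb (k + 1)‖ ^ 2 := by positivity
    simp only [gap]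
    linarith
  have hgap : ∀ k, gap (k + 1) ≤ potential k - potential (k + 1) := by
    intro k
    have hprox := hstep k ys
    have hjoint := hf.apply_add_inner_le_of_forall_le_fst (hfd (x (k + 1), yb k)) (hx k)
      (hgy (x (k + 1)) (yb k)) (xs, ys)
    rw [norm_sub_rev ys, norm_sub_rev ys] at hprox
    simp only [gap, potential]
    linarith
  intro k hk
  have hsum := natCast_mul_le_sub_of_le_sub hdecrease hgap k
  have hkpos : (0 : ℝ) < k := by exact_mod_cast hk
  rw [le_div_iff₀ (by positivity)]
  calc gap k * (2 * ρ * k) = 2 * ρ * (k * gap k) := by ring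
    _ ≤ 2 * ρ * potential 0 := by
        gcongr
        exact hsum.trans (sub_le_self _ (by positivity))
    _ = ‖yb 0 - ys‖ ^ 2 := by simp only [potential]; field_simp

/-- O(1/k) convergence rate of ISTA with partial linearization (Corollary 3.1):
with `x^{k+1} = argmin_x f(x, ȳ^k)` and `ȳ^{k+1}` the prox-linearized update,
`F(x^k, ȳ^k) - F(x*, y*) ≤ ‖ȳ^0 - y*‖² / (2ρk)` for all `k ≥ 1`. -/
theorem stmt8 (m M : ℕ)
    (f : EuclideanSpace ℝ (Fin m) → EuclideanSpace ℝ (Fin M) → ℝ)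
    (g : EuclideanSpace ℝ (Fin M) → ℝ)
    (gy : EuclideanSpace ℝ (Fin m) → EuclideanSpace ℝ (Fin M) → EuclideanSpace ℝ (Fin M))
    (hf : ConvexOn ℝ Set.univ (fun q : EuclideanSpace ℝ (Fin m) × EuclideanSpace ℝ (Fin M) => f q.1 q.2))
    (hfd : Differentiable ℝ (fun q : EuclideanSpace ℝ (Fin m) × EuclideanSpace ℝ (Fin M) => f q.1 q.2))
    (hg : ConvexOn ℝ Set.univ g)
    (hgy : ∀ x y, HasGradientAt (fun y' => f x y') (gy x y) y)
    (L : ℝ) (hL : 0 < L)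
    (hLip : ∀ x y z, ‖gy x y - gy x z‖ ≤ L * ‖y - z‖)
    (ρ : ℝ) (hρ : 0 < ρ) (hρL : ρ ≤ 1 / L)
    (x : ℕ → EuclideanSpace ℝ (Fin m)) (yb : ℕ → EuclideanSpace ℝ (Fin M))
    (hx : ∀ k x', f (x (k + 1)) (yb k) ≤ f x' (yb k))
    (hy : ∀ k w,
      ⟪gy (x (k + 1)) (yb k), yb (k + 1) - yb k⟫
          + (1 / (2 * ρ)) * ‖yb (k + 1) - yb k‖ ^ 2 + g (yb (k + 1)) ≤
        ⟪gy (x (k + 1)) (yb k), w - yb k⟫ + (1 / (2 * ρ)) * ‖w - yb k‖ ^ 2 + g w)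
    (xs : EuclideanSpace ℝ (Fin m)) (ys : EuclideanSpace ℝ (Fin M))
    (hmin : ∀ x' y', f xs ys + g ys ≤ f x' y' + g y') :
    ∀ k : ℕ, 1 ≤ k →
      (f (x k) (yb k) + g (yb k)) - (f xs ys + g ys) ≤
        ‖yb 0 - ys‖ ^ 2 / (2 * ρ * k) :=
  stmt8_general m M f g gy hf hfd hg hgy L hL hLip ρ hρ hρL x yb hx hy xs ys
end

section
/- Under the assumptions of the previous statement, and with the FISTA-type acceleration (momentum sequence t_0 = 1, t_{k+1} = (1 + √(1 + 4t_k²))/2, z^{k+1} = ȳ^{k+1} + ((t_k - 1)/t_{k+1})(ȳ^{k+1} - ȳ^k), with x^{k+1} = argmin_x f(x, z^k) and ȳ^{k+1} the proximal-linearized update at z^k), the iterates satisfy F(x^k, ȳ^k) - F(x*, y*) ≤ 2‖ȳ^0 - y*‖² / (ρ(k+1)²) for ρ ≤ 1/L_y(f). -/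
/-!
One FISTA step is a proximal-gradient step for `y ↦ f (x^{k+1}) y + g y` at `z^k`. The descent
lemma for the `L`-smooth `f (x^{k+1})`, the three-point property of the proximal step and the
gradient inequality of the jointly convex `f` (whose `x`-derivative vanishes at the partial
minimiser `x^{k+1}`) give, for every `(x', w)`,
`F(x^{k+1}, ȳ^{k+1}) - F(x', w) ≤ (‖w - z^k‖² - ‖w - ȳ^{k+1}‖²) / (2ρ)`.
Applied at `(x^k, ȳ^k)` and at `(x*, y*)`, combined with weights `t_{k+1} - 1` and `1`, and using
`t_{k+1}² - t_{k+1} = t_k²`, this makes the Beck–Teboulle energy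
`2ρ t_k² (F_{k+1} - F*) + ‖t_k ȳ^{k+1} - (t_k - 1) ȳ^k - y*‖²` nonincreasing. It starts below
`‖ȳ^0 - y*‖²`, and `t_k ≥ (k + 2) / 2` turns this into the rate.
-/

open Set Filter Topology InnerProductSpace RealInnerProductSpace

theorem ConvexOn.add_le_of_hasFDerivAt {V : Type*} [NormedAddCommGroup V] [NormedSpace ℝ V]
    {s : Set V} {φ : V → ℝ} (hφ : ConvexOn ℝ s φ) {a b : V} (ha : a ∈ s) (hb : b ∈ s)
    {D : V →L[ℝ] ℝ} (hD : HasFDerivAt φ D a) : φ a + D (b - a) ≤ φ b := by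
  let ℓ : ℝ →ᵃ[ℝ] V := AffineMap.lineMap a b
  have hline : HasDerivAt ℓ (b - a) 0 := by
    simpa using AffineMap.hasDerivAt_lineMap (a := a) (b := b) (x := (0 : ℝ))
  have hderiv : HasDerivAt (φ ∘ ℓ) (D (b - a)) 0 :=
    HasFDerivAt.comp_hasDerivAt (0 : ℝ) (by simpa [ℓ] using hD) hline
  have := (hφ.comp_affineMap ℓ).le_slope_of_hasDerivAt (x := 0) (y := 1)
    (by simpa [ℓ] using ha) (by simpa [ℓ] using hb) one_pos hderiv
  simp only [slope_def_field, Function.comp_apply, AffineMap.lineMap_apply_one,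
    AffineMap.lineMap_apply_zero, sub_zero, div_one, ℓ] at this
  linarith

section Smooth

variable {F : Type*} [NormedAddCommGroup F] [InnerProductSpace ℝ F] [CompleteSpace F]

theorem HasGradientAt.hasDerivAt_comp_lineMap {h : F → ℝ} {G y d : F} {s : ℝ}
    (hG : HasGradientAt h G (y + s • d)) :
    HasDerivAt (fun s : ℝ => h (y + s • d)) ⟪G, d⟫ s := by
  have hline : HasDerivAt (fun s : ℝ => y + s • d) d s := by
    simpa using ((hasDerivAt_id s).smul_const d).const_add y
  simpa [toDual_apply_apply, Function.comp_def] using hG.hasFDerivAt.comp_hasDerivAt s hline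

theorem le_add_inner_add_of_lipschitz_gradient {h : F → ℝ} {G : F → F}
    (hG : ∀ p, HasGradientAt h (G p) p) {L : ℝ} (hLip : ∀ p q, ‖G p - G q‖ ≤ L * ‖p - q‖)
    (y d : F) : h (y + d) ≤ h y + ⟪G y, d⟫ + L / 2 * ‖d‖ ^ 2 := by
  have hderiv (s : ℝ) : HasDerivAt (fun s : ℝ => h (y + s • d)) ⟪G (y + s • d), d⟫ s :=
    (hG _).hasDerivAt_comp_lineMap
  have hbound (s : ℝ) : HasDerivAt (fun s => h y + s * ⟪G y, d⟫ + L / 2 * ‖d‖ ^ 2 * s ^ 2)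
      (⟪G y, d⟫ + L * ‖d‖ ^ 2 * s) s := by
    refine ((((hasDerivAt_id s).mul_const ⟪G y, d⟫).const_add (h y)).add
      ((hasDerivAt_pow 2 s).const_mul (L / 2 * ‖d‖ ^ 2))).congr_deriv ?_
    simp only [Nat.cast_ofNat, Nat.add_one_sub_one, pow_one]
    ring
  have key := image_le_of_deriv_right_le_deriv_boundary (a := 0) (b := 1)
    (fun s _ => (hderiv s).continuousAt.continuousWithinAt)
    (fun s _ => (hderiv s).hasDerivWithinAt) (by simp)
    (fun s _ => (hbound s).continuousAt.continuousWithinAt)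
    (fun s _ => (hbound s).hasDerivWithinAt) (fun s hs => ?_) (right_mem_Icc.2 zero_le_one)
  · simpa using key
  calc ⟪G (y + s • d), d⟫ = ⟪G y, d⟫ + ⟪G (y + s • d) - G y, d⟫ := by
        rw [inner_sub_left]; ring
    _ ≤ ⟪G y, d⟫ + ‖G (y + s • d) - G y‖ * ‖d‖ := by gcongr; exact real_inner_le_norm _ _
    _ ≤ ⟪G y, d⟫ + L * ‖s • d‖ * ‖d‖ := by gcongr; simpa using hLip (y + s • d) y
    _ = ⟪G y, d⟫ + L * ‖d‖ ^ 2 * s := by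
        rw [norm_smul, Real.norm_of_nonneg hs.1]; ring

end Smooth

section Prox

variable {F : Type*} [NormedAddCommGroup F] [InnerProductSpace ℝ F]

theorem norm_add_smul_sub_sq (a b : F) (θ : ℝ) :
    ‖a + θ • (b - a)‖ ^ 2 = (1 - θ) * ‖a‖ ^ 2 + θ * ‖b‖ ^ 2 - θ * (1 - θ) * ‖b - a‖ ^ 2 := by
  simp only [← real_inner_self_eq_norm_sq, inner_add_left, inner_add_right, inner_sub_left,
    inner_sub_right, real_inner_smul_left, real_inner_smul_right, real_inner_comm a b]
  ring

theorem ConvexOn.add_mul_sq_norm_sub_le {s : Set F} {φ : F → ℝ} (hφ : ConvexOn ℝ s φ) (c : ℝ)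
    {a z w : F} (ha : a ∈ s) (hw : w ∈ s)
    (hmin : ∀ v ∈ s, φ a + c * ‖a - z‖ ^ 2 ≤ φ v + c * ‖v - z‖ ^ 2) :
    φ a + c * ‖a - z‖ ^ 2 + c * ‖w - a‖ ^ 2 ≤ φ w + c * ‖w - z‖ ^ 2 := by
  have hθ : ∀ θ ∈ Ioo (0 : ℝ) 1,
      φ a + c * ‖a - z‖ ^ 2 + (1 - θ) * (c * ‖w - a‖ ^ 2) ≤ φ w + c * ‖w - z‖ ^ 2 := by
    rintro θ ⟨hθ₀, hθ₁⟩
    have hcomb : (1 - θ) • a + θ • w = a + θ • (w - a) := by module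
    have hφv := hφ.2 ha hw (sub_nonneg.2 hθ₁.le) hθ₀.le (sub_add_cancel 1 θ)
    rw [hcomb, smul_eq_mul, smul_eq_mul] at hφv
    have hnorm : ‖a + θ • (w - a) - z‖ ^ 2 =
        (1 - θ) * ‖a - z‖ ^ 2 + θ * ‖w - z‖ ^ 2 - θ * (1 - θ) * ‖w - a‖ ^ 2 := by
      rw [show a + θ • (w - a) - z = (a - z) + θ • ((w - z) - (a - z)) by module,
        norm_add_smul_sub_sq, sub_sub_sub_cancel_right]
    have hv := hmin _ (hφ.1.add_smul_sub_mem ha hw ⟨hθ₀.le, hθ₁.le⟩)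
    refine le_of_mul_le_mul_left ?_ hθ₀
    linear_combination hv + hφv + c * hnorm
  have hlim : Tendsto (fun θ : ℝ => φ a + c * ‖a - z‖ ^ 2 + (1 - θ) * (c * ‖w - a‖ ^ 2))
      (𝓝[>] 0) (𝓝 (φ a + c * ‖a - z‖ ^ 2 + (1 - 0) * (c * ‖w - a‖ ^ 2))) :=
    ((continuous_const.add ((continuous_const.sub continuous_id).mul
      continuous_const)).tendsto 0).mono_left nhdsWithin_le_nhds
  rw [sub_zero, one_mul] at hlim
  exact le_of_tendsto hlim (mem_of_superset (Ioo_mem_nhdsGT one_pos) hθ)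

end Prox

section ProxGradStep

variable {E₁ E₂ : Type*} [NormedAddCommGroup E₁] [NormedSpace ℝ E₁]
  [NormedAddCommGroup E₂] [InnerProductSpace ℝ E₂] [CompleteSpace E₂]

theorem ConvexOn.add_inner_sub_le_of_isLocalMin_fst {f : E₁ → E₂ → ℝ}
    (hf : ConvexOn ℝ univ (fun q : E₁ × E₂ => f q.1 q.2)) {a : E₁} {z G : E₂}
    (hfd : DifferentiableAt ℝ (fun q : E₁ × E₂ => f q.1 q.2) (a, z))
    (hG : HasGradientAt (f a) G z) (hmin : IsLocalMin (f · z) a) (x : E₁) (w : E₂) :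
    f a z + ⟪G, w - z⟫ ≤ f x w := by
  set D := fderiv ℝ (fun q : E₁ × E₂ => f q.1 q.2) (a, z)
  have hD : HasFDerivAt (fun q : E₁ × E₂ => f q.1 q.2) D (a, z) := hfd.hasFDerivAt
  have hD₁ : D.comp (.inl ℝ E₁ E₂) = 0 :=
    hmin.hasFDerivAt_eq_zero (hD.comp (f := fun e => (e, z)) a (hasFDerivAt_prodMk_left a z))
  have hD₂ : D.comp (.inr ℝ E₁ E₂) = toDual ℝ E₂ G :=
    (hD.comp z (hasFDerivAt_prodMk_right a z)).unique hG.hasFDerivAt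
  have h₁ := congrArg (· (x - a)) hD₁
  have h₂ := congrArg (· (w - z)) hD₂
  simp only [ContinuousLinearMap.comp_apply, ContinuousLinearMap.inl_apply,
    ContinuousLinearMap.inr_apply, zero_apply, toDual_apply_apply] at h₁ h₂
  have hsplit : D (x - a, w - z) = ⟪G, w - z⟫ := by
    rw [← h₂, ← zero_add (D (0, w - z)), ← h₁, ← map_add, Prod.mk_add_mk, add_zero, zero_add]
  have := hf.add_le_of_hasFDerivAt (mem_univ (a, z)) (mem_univ (x, w)) hD
  rwa [Prod.mk_sub_mk, hsplit] at this

theorem proxGrad_step_sub_le {f : E₁ → E₂ → ℝ} {g : E₂ → ℝ} {G : E₂ → E₂}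
    (hf : ConvexOn ℝ univ (fun q : E₁ × E₂ => f q.1 q.2)) (hg : ConvexOn ℝ univ g)
    {a : E₁} {z b : E₂} (hfd : DifferentiableAt ℝ (fun q : E₁ × E₂ => f q.1 q.2) (a, z))
    (hG : ∀ y, HasGradientAt (f a) (G y) y) {L ρ : ℝ} (hLip : ∀ y y', ‖G y - G y'‖ ≤ L * ‖y - y'‖)
    (hLρ : L ≤ 1 / ρ) (ha : ∀ x, f a z ≤ f x z)
    (hb : ∀ w, ⟪G z, b - z⟫ + (1 / (2 * ρ)) * ‖b - z‖ ^ 2 + g b ≤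
      ⟪G z, w - z⟫ + (1 / (2 * ρ)) * ‖w - z‖ ^ 2 + g w)
    (x : E₁) (w : E₂) :
    (f a b + g b) - (f x w + g w) ≤ (1 / (2 * ρ)) * (‖w - z‖ ^ 2 - ‖w - b‖ ^ 2) := by
  have hdescent := le_add_inner_add_of_lipschitz_gradient hG hLip z (b - z)
  rw [add_sub_cancel] at hdescent
  have hL : L / 2 * ‖b - z‖ ^ 2 ≤ 1 / (2 * ρ) * ‖b - z‖ ^ 2 := by
    rw [← div_div, div_right_comm]
    gcongr
  have hconv : ConvexOn ℝ univ (fun v => ⟪G z, v⟫ + g v) :=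
    ((innerSL ℝ (G z)).toLinearMap.convexOn convex_univ).add hg
  have hprox := hconv.add_mul_sq_norm_sub_le (1 / (2 * ρ)) (z := z) (mem_univ b) (mem_univ w)
    fun v _ => by
      linarith [hb v, inner_sub_right (𝕜 := ℝ) (G z) v z, inner_sub_right (𝕜 := ℝ) (G z) b z]
  have hgrad := hf.add_inner_sub_le_of_isLocalMin_fst hfd (hG z) (.of_forall ha) x w
  rw [inner_sub_right] at hdescent hgrad
  linarith

end ProxGradStep

section Momentum

variable {t : ℕ → ℝ}

theorem fista_momentum_sq_sub (htrec : ∀ k, t (k + 1) = (1 + √(1 + 4 * t k ^ 2)) / 2) (k : ℕ) :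
    t (k + 1) ^ 2 - t (k + 1) = t k ^ 2 := by
  have hsq := Real.sq_sqrt (by positivity : (0 : ℝ) ≤ 1 + 4 * t k ^ 2)
  rw [htrec k]
  linear_combination hsq / 4

theorem fista_momentum_ge (ht0 : t 0 = 1)
    (htrec : ∀ k, t (k + 1) = (1 + √(1 + 4 * t k ^ 2)) / 2) (k : ℕ) :
    ((k : ℝ) + 2) / 2 ≤ t k := by
  induction k with
  | zero => simp [ht0]
  | succ k ih =>
    have hsqrt : 2 * t k ≤ √(1 + 4 * t k ^ 2) :=
      (le_abs_self _).trans (Real.abs_le_sqrt (by linarith))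
    rw [htrec k]
    push_cast
    linarith

end Momentum

section Energy

variable {E : Type*} [NormedAddCommGroup E] [InnerProductSpace ℝ E]

theorem fista_norm_sq_identity (s : ℝ) (z y y' p : E) :
    s * ((s - 1) * (‖y - z‖ ^ 2 - ‖y - y'‖ ^ 2) + (‖p - z‖ ^ 2 - ‖p - y'‖ ^ 2)) =
      ‖s • z - (s - 1) • y - p‖ ^ 2 - ‖s • y' - (s - 1) • y - p‖ ^ 2 := by
  simp only [← real_inner_self_eq_norm_sq, inner_sub_left, inner_sub_right, real_inner_smul_left,
    real_inner_smul_right, real_inner_comm z y,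
    real_inner_comm p y, real_inner_comm p z, real_inner_comm y' y, real_inner_comm p y']
  ring

def fistaEnergy (ρ : ℝ) (t a : ℕ → ℝ) (yb : ℕ → E) (ys : E) (k : ℕ) : ℝ :=
  2 * ρ * t k ^ 2 * a (k + 1) + ‖t k • yb (k + 1) - (t k - 1) • yb k - ys‖ ^ 2

variable {ρ : ℝ} {t a : ℕ → ℝ} {yb z : ℕ → E} {ys : E}

theorem fistaEnergy_zero_le (hρ : 0 < ρ) (ht0 : t 0 = 1) (hz0 : z 0 = yb 0)
    (hopt : a 1 ≤ (1 / (2 * ρ)) * (‖ys - z 0‖ ^ 2 - ‖ys - yb 1‖ ^ 2)) :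
    fistaEnergy ρ t a yb ys 0 ≤ ‖yb 0 - ys‖ ^ 2 := by
  rw [hz0, norm_sub_rev ys, norm_sub_rev ys] at hopt
  have h := mul_le_mul_of_nonneg_left hopt (by positivity : (0 : ℝ) ≤ 2 * ρ)
  rw [← mul_assoc, mul_one_div_cancel (by positivity), one_mul] at h
  simp only [fistaEnergy, ht0, one_pow, mul_one, sub_self, zero_smul, sub_zero, one_smul]
  linarith

theorem fistaEnergy_succ_le (hρ : 0 < ρ) {k : ℕ} (ht : 1 ≤ t (k + 1))
    (htsq : t (k + 1) ^ 2 - t (k + 1) ≤ t k ^ 2)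
    (hz : z (k + 1) = yb (k + 1) + ((t k - 1) / t (k + 1)) • (yb (k + 1) - yb k))
    (ha : 0 ≤ a (k + 1))
    (hdesc : a (k + 2) - a (k + 1) ≤
      (1 / (2 * ρ)) * (‖yb (k + 1) - z (k + 1)‖ ^ 2 - ‖yb (k + 1) - yb (k + 2)‖ ^ 2))
    (hopt : a (k + 2) ≤ (1 / (2 * ρ)) * (‖ys - z (k + 1)‖ ^ 2 - ‖ys - yb (k + 2)‖ ^ 2)) :
    fistaEnergy ρ t a yb ys (k + 1) ≤ fistaEnergy ρ t a yb ys k := by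
  have hcenter : t (k + 1) • z (k + 1) - (t (k + 1) - 1) • yb (k + 1) - ys =
      t k • yb (k + 1) - (t k - 1) • yb k - ys := by
    rw [hz, smul_add, smul_smul, mul_div_cancel₀ _ (by positivity)]
    module
  have hid := fista_norm_sq_identity (t (k + 1)) (z (k + 1)) (yb (k + 1)) (yb (k + 2)) ys
  rw [hcenter] at hid
  rw [one_div_mul_eq_div, le_div_iff₀ (by positivity)] at hdesc hopt
  have hstep := mul_le_mul_of_nonneg_left
    (add_le_add (mul_le_mul_of_nonneg_left hdesc (sub_nonneg.2 ht)) hopt)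
    (by positivity : (0 : ℝ) ≤ t (k + 1))
  have hmomentum := mul_le_mul_of_nonneg_left htsq (by positivity : (0 : ℝ) ≤ 2 * ρ * a (k + 1))
  unfold fistaEnergy
  linarith

theorem fista_gap_le (hρ : 0 < ρ) (ht0 : t 0 = 1)
    (htrec : ∀ k, t (k + 1) = (1 + √(1 + 4 * t k ^ 2)) / 2) (hz0 : z 0 = yb 0)
    (hzrec : ∀ k, z (k + 1) = yb (k + 1) + ((t k - 1) / t (k + 1)) • (yb (k + 1) - yb k))
    (ha : ∀ k, 0 ≤ a k)
    (hdesc : ∀ k, a (k + 1) - a k ≤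
      (1 / (2 * ρ)) * (‖yb k - z k‖ ^ 2 - ‖yb k - yb (k + 1)‖ ^ 2))
    (hopt : ∀ k, a (k + 1) ≤ (1 / (2 * ρ)) * (‖ys - z k‖ ^ 2 - ‖ys - yb (k + 1)‖ ^ 2)) (k : ℕ) :
    a (k + 1) ≤ 2 * ‖yb 0 - ys‖ ^ 2 / (ρ * ((k : ℝ) + 1 + 1) ^ 2) := by
  have ht (k : ℕ) : ((k : ℝ) + 2) / 2 ≤ t k := fista_momentum_ge ht0 htrec k
  have henergy : fistaEnergy ρ t a yb ys k ≤ ‖yb 0 - ys‖ ^ 2 := by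
    induction k with
    | zero => exact fistaEnergy_zero_le hρ ht0 hz0 (hopt 0)
    | succ k ih =>
      refine le_trans (fistaEnergy_succ_le hρ ?_ (fista_momentum_sq_sub htrec k).le (hzrec k)
        (ha _) (hdesc _) (hopt _)) ih
      linarith [ht (k + 1), (k + 1).cast_nonneg (α := ℝ)]
  have htk : (((k : ℝ) + 2) / 2) ^ 2 ≤ t k ^ 2 := pow_le_pow_left₀ (by positivity) (ht k) 2
  have hgap := mul_le_mul_of_nonneg_left htk (mul_nonneg (by positivity) (ha (k + 1)))
  rw [le_div_iff₀ (by positivity)]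
  unfold fistaEnergy at henergy
  nlinarith [sq_nonneg ‖t k • yb (k + 1) - (t k - 1) • yb k - ys‖]

end Energy

theorem stmt9_general (m M : ℕ)
    (f : EuclideanSpace ℝ (Fin m) → EuclideanSpace ℝ (Fin M) → ℝ)
    (g : EuclideanSpace ℝ (Fin M) → ℝ)
    (gy : EuclideanSpace ℝ (Fin m) → EuclideanSpace ℝ (Fin M) → EuclideanSpace ℝ (Fin M))
    (hf : ConvexOn ℝ Set.univ (fun q : EuclideanSpace ℝ (Fin m) × EuclideanSpace ℝ (Fin M) => f q.1 q.2))
    (hfd : Differentiable ℝ (fun q : EuclideanSpace ℝ (Fin m) × EuclideanSpace ℝ (Fin M) => f q.1 q.2))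
    (hg : ConvexOn ℝ Set.univ g)
    (hgy : ∀ x y, HasGradientAt (fun y' => f x y') (gy x y) y)
    (L : ℝ)
    (hLip : ∀ x y z, ‖gy x y - gy x z‖ ≤ L * ‖y - z‖)
    (ρ : ℝ) (hρ : 0 < ρ) (hρL : ρ ≤ 1 / L)
    (t : ℕ → ℝ) (ht0 : t 0 = 1)
    (htrec : ∀ k, t (k + 1) = (1 + Real.sqrt (1 + 4 * t k ^ 2)) / 2)
    (x : ℕ → EuclideanSpace ℝ (Fin m))
    (yb z : ℕ → EuclideanSpace ℝ (Fin M))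
    (hz0 : z 0 = yb 0)
    (hzrec : ∀ k, z (k + 1) = yb (k + 1) + ((t k - 1) / t (k + 1)) • (yb (k + 1) - yb k))
    (hx : ∀ k x', f (x (k + 1)) (z k) ≤ f x' (z k))
    (hy : ∀ k w,
      ⟪gy (x (k + 1)) (z k), yb (k + 1) - z k⟫
          + (1 / (2 * ρ)) * ‖yb (k + 1) - z k‖ ^ 2 + g (yb (k + 1)) ≤
        ⟪gy (x (k + 1)) (z k), w - z k⟫ + (1 / (2 * ρ)) * ‖w - z k‖ ^ 2 + g w)
    (xs : EuclideanSpace ℝ (Fin m)) (ys : EuclideanSpace ℝ (Fin M))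
    (hmin : ∀ x' y', f xs ys + g ys ≤ f x' y' + g y') :
    ∀ k : ℕ, 1 ≤ k →
      (f (x k) (yb k) + g (yb k)) - (f xs ys + g ys) ≤
        2 * ‖yb 0 - ys‖ ^ 2 / (ρ * (k + 1) ^ 2) := by
  have hLρ : L ≤ 1 / ρ := by
    simpa using one_div_le_one_div_of_le hρ hρL
  have hstep (k : ℕ) := proxGrad_step_sub_le hf hg (hfd _) (hgy _) (hLip _) hLρ (hx k) (hy k)
  intro k hk
  obtain ⟨k, rfl⟩ := Nat.exists_eq_add_of_le' hk
  have := fista_gap_le (a := fun k => (f (x k) (yb k) + g (yb k)) - (f xs ys + g ys))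
    hρ ht0 htrec hz0 hzrec (fun k => sub_nonneg.2 (hmin _ _))
    (fun k => by simpa using hstep k (x k) (yb k)) (fun k => hstep k xs ys) k
  simpa using this

/-- O(1/k²) convergence rate of FISTA with partial linearization (Theorem 3.2):
with momentum sequence `t_0 = 1`, `t_{k+1} = (1+√(1+4t_k²))/2`,
`z^{k+1} = ȳ^{k+1} + ((t_k-1)/t_{k+1})(ȳ^{k+1} - ȳ^k)`, `x^{k+1} = argmin_x f(x, z^k)`
and `ȳ^{k+1}` the prox-linearized update at `z^k`, the iterates satisfy
`F(x^k, ȳ^k) - F(x*, y*) ≤ 2‖ȳ^0 - y*‖²/(ρ(k+1)²)` for `ρ ≤ 1/L_y(f)`. -/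
theorem stmt9 (m M : ℕ)
    (f : EuclideanSpace ℝ (Fin m) → EuclideanSpace ℝ (Fin M) → ℝ)
    (g : EuclideanSpace ℝ (Fin M) → ℝ)
    (gy : EuclideanSpace ℝ (Fin m) → EuclideanSpace ℝ (Fin M) → EuclideanSpace ℝ (Fin M))
    (hf : ConvexOn ℝ Set.univ (fun q : EuclideanSpace ℝ (Fin m) × EuclideanSpace ℝ (Fin M) => f q.1 q.2))
    (hfd : Differentiable ℝ (fun q : EuclideanSpace ℝ (Fin m) × EuclideanSpace ℝ (Fin M) => f q.1 q.2))
    (hg : ConvexOn ℝ Set.univ g)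
    (hgy : ∀ x y, HasGradientAt (fun y' => f x y') (gy x y) y)
    (L : ℝ) (hL : 0 < L)
    (hLip : ∀ x y z, ‖gy x y - gy x z‖ ≤ L * ‖y - z‖)
    (ρ : ℝ) (hρ : 0 < ρ) (hρL : ρ ≤ 1 / L)
    (t : ℕ → ℝ) (ht0 : t 0 = 1)
    (htrec : ∀ k, t (k + 1) = (1 + Real.sqrt (1 + 4 * t k ^ 2)) / 2)
    (x : ℕ → EuclideanSpace ℝ (Fin m))
    (yb z : ℕ → EuclideanSpace ℝ (Fin M))
    (hz0 : z 0 = yb 0)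
    (hzrec : ∀ k, z (k + 1) = yb (k + 1) + ((t k - 1) / t (k + 1)) • (yb (k + 1) - yb k))
    (hx : ∀ k x', f (x (k + 1)) (z k) ≤ f x' (z k))
    (hy : ∀ k w,
      ⟪gy (x (k + 1)) (z k), yb (k + 1) - z k⟫
          + (1 / (2 * ρ)) * ‖yb (k + 1) - z k‖ ^ 2 + g (yb (k + 1)) ≤
        ⟪gy (x (k + 1)) (z k), w - z k⟫ + (1 / (2 * ρ)) * ‖w - z k‖ ^ 2 + g w)
    (xs : EuclideanSpace ℝ (Fin m)) (ys : EuclideanSpace ℝ (Fin M))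
    (hmin : ∀ x' y', f xs ys + g ys ≤ f x' y' + g y') :
    ∀ k : ℕ, 1 ≤ k →
      (f (x k) (yb k) + g (yb k)) - (f xs ys + g ys) ≤
        2 * ‖yb 0 - ys‖ ^ 2 / (ρ * (k + 1) ^ 2) :=
  stmt9_general m M f g gy hf hfd hg hgy L hLip ρ hρ hρL t ht0 htrec x yb z hz0 hzrec hx hy xs ys
    hmin
end

section
/- In the APLM-S algorithm with ρ ≤ 1/L_y(f), after k iterations of which k_n are regular (non-skipping) iterations, the iterates satisfy F(x^k, ȳ^k) - F(x*, y*) ≤ ‖ȳ^0 - y*‖² / (2ρ(k + k_n)). -/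
/-!
The update of `ȳ` is a proximal gradient step on `y ↦ f(x^{k+1}, y) + g(y)` from `y^{k+1}`.
Since `ρ ≤ 1/L`, the descent lemma and the three-point inequality of the proximal objective give
`F(x^{k+1}, ȳ^{k+1}) + ‖ȳ^{k+1} - y*‖²/(2ρ) ≤ F(x*, y*) + ‖y^{k+1} - y*‖²/(2ρ)`; the linearization
`f(x^{k+1}, y^{k+1}) + ⟪∇_y f, y* - y^{k+1}⟫` minorizes `f(x*, y*)` because `x^{k+1}` minimizes
`f(·, y^{k+1})`, so the `x`-part of the joint gradient vanishes.
A skipping step has `y^{k+1} = ȳ^k`, so `‖ȳ - y*‖²/(2ρ)` drops by at least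
`F(x^{k+1}, ȳ^{k+1}) - F*`.
A regular step is itself a proximal step of the augmented Lagrangian, with `-γ^k` a subgradient of
`g` at `ȳ^k`, and gives the same inequality from `ȳ^k` to `y^{k+1}`; since the `ȳ`-step does not
increase `F`, the drop is at least twice `F(x^{k+1}, ȳ^{k+1}) - F*`. As `F(x^k, ȳ^k)` is
nonincreasing, telescoping yields `(k + k_n) (F(x^k, ȳ^k) - F*) ≤ ‖ȳ^0 - y*‖²/(2ρ)`.
-/

open RealInnerProductSpace
open Set Filter Topology Finset

theorem ConvexOn.add_fderiv_sub_le {E : Type*} [NormedAddCommGroup E] [NormedSpace ℝ E]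
    {φ : E → ℝ} (hφ : ConvexOn ℝ univ φ) {φ' : E →L[ℝ] ℝ} {p : E} (hp : HasFDerivAt φ φ' p)
    (q : E) : φ p + φ' (q - p) ≤ φ q := by
  have hline : HasDerivAt (φ ∘ AffineMap.lineMap p q) (φ' (q - p)) (0 : ℝ) :=
    hp.comp_hasDerivAt_of_eq 0 AffineMap.hasDerivAt_lineMap (by simp)
  have hslope := (hφ.comp_affineMap (AffineMap.lineMap p q)).le_slope_of_hasDerivAt
    (mem_univ 0) (mem_univ 1) one_pos hline
  simp only [slope_def_field, Function.comp_apply, AffineMap.lineMap_apply_zero,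
    AffineMap.lineMap_apply_one, sub_zero, div_one] at hslope
  linarith

section InnerProductSpace

variable {F : Type*} [NormedAddCommGroup F] [InnerProductSpace ℝ F]

theorem norm_one_sub_smul_add_smul_sq (a b : F) (t : ℝ) :
    ‖(1 - t) • a + t • b‖ ^ 2 = (1 - t) * ‖a‖ ^ 2 + t * ‖b‖ ^ 2 - t * (1 - t) * ‖b - a‖ ^ 2 := by
  rw [norm_add_sq_real, norm_sub_sq_real, norm_smul, norm_smul, real_inner_smul_left,
    real_inner_smul_right, real_inner_comm a b]
  simp only [Real.norm_eq_abs, mul_pow, sq_abs]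
  ring

/-- Compare the minimum value with the value at `(1 - t) • p + t • q` and let `t → 0⁺`. -/
theorem ConvexOn.three_point {G : Type*} [AddCommGroup G] [Module ℝ G] {ψ : G → ℝ}
    (hψ : ConvexOn ℝ univ ψ) (T : G →ₗ[ℝ] F) (v : F) (c : ℝ) {p : G}
    (hp : ∀ q, ψ p + c * ‖T p - v‖ ^ 2 ≤ ψ q + c * ‖T q - v‖ ^ 2) (q : G) :
    ψ p + c * ‖T p - v‖ ^ 2 + c * ‖T q - T p‖ ^ 2 ≤ ψ q + c * ‖T q - v‖ ^ 2 := by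
  have hsegment : ∀ t ∈ Ioo (0 : ℝ) 1,
      ψ p + c * ‖T p - v‖ ^ 2 + (1 - t) * (c * ‖T q - T p‖ ^ 2) ≤ ψ q + c * ‖T q - v‖ ^ 2 := by
    rintro t ⟨ht0, ht1⟩
    have hψt := hψ.2 (mem_univ p) (mem_univ q) (sub_nonneg.2 ht1.le) ht0.le (sub_add_cancel 1 t)
    have hcomb : T ((1 - t) • p + t • q) - v = (1 - t) • (T p - v) + t • (T q - v) := by
      simp only [map_add, map_smul]
      module
    have hmin := hp ((1 - t) • p + t • q)
    rw [hcomb, norm_one_sub_smul_add_smul_sq, sub_sub_sub_cancel_right] at hmin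
    refine le_of_mul_le_mul_left ?_ ht0
    linear_combination hmin + hψt
  have hlim : Tendsto (fun t : ℝ => ψ p + c * ‖T p - v‖ ^ 2 + (1 - t) * (c * ‖T q - T p‖ ^ 2))
      (𝓝[>] 0) (𝓝 (ψ p + c * ‖T p - v‖ ^ 2 + c * ‖T q - T p‖ ^ 2)) := by
    refine tendsto_nhdsWithin_of_tendsto_nhds ((by fun_prop : Continuous _).tendsto' 0 _ ?_)
    simp
  exact le_of_tendsto hlim (eventually_of_mem (Ioo_mem_nhdsGT one_pos) hsegment)

variable {g : F → ℝ} {ρ : ℝ} {G₀ y z : F}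

theorem prox_three_point (hg : ConvexOn ℝ univ g)
    (hz : ∀ w, ⟪G₀, z - y⟫ + 1 / (2 * ρ) * ‖z - y‖ ^ 2 + g z ≤
      ⟪G₀, w - y⟫ + 1 / (2 * ρ) * ‖w - y‖ ^ 2 + g w) (w : F) :
    ⟪G₀, z - y⟫ + g z + 1 / (2 * ρ) * ‖z - y‖ ^ 2 + 1 / (2 * ρ) * ‖w - z‖ ^ 2 ≤
      ⟪G₀, w - y⟫ + g w + 1 / (2 * ρ) * ‖w - y‖ ^ 2 := by
  have hψ : ConvexOn ℝ univ fun w => ⟪G₀, w⟫ + g w :=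
    ((innerₛₗ ℝ G₀).convexOn convex_univ).add hg
  have h := hψ.three_point LinearMap.id y (1 / (2 * ρ)) (p := z) (fun w => by
    have := hz w
    simp only [inner_sub_right, LinearMap.id_coe, id_eq] at this ⊢
    linarith) w
  simp only [LinearMap.id_coe, id_eq, inner_sub_right] at h ⊢
  linarith

theorem prox_subgradient (hg : ConvexOn ℝ univ g)
    (hz : ∀ w, ⟪G₀, z - y⟫ + 1 / (2 * ρ) * ‖z - y‖ ^ 2 + g z ≤
      ⟪G₀, w - y⟫ + 1 / (2 * ρ) * ‖w - y‖ ^ 2 + g w) (w : F) :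
    g z + ⟪-(G₀ - (1 / ρ) • (y - z)), w - z⟫ ≤ g w := by
  have h := prox_three_point hg hz w
  have hsplit : ‖w - y‖ ^ 2 = ‖w - z‖ ^ 2 + 2 * ⟪w - z, z - y⟫ + ‖z - y‖ ^ 2 := by
    rw [← norm_add_sq_real, sub_add_sub_cancel]
  have hinner : ⟪-(G₀ - (1 / ρ) • (y - z)), w - z⟫ =
      ⟪G₀, z - y⟫ - ⟪G₀, w - y⟫ - 1 / ρ * ⟪w - z, z - y⟫ := by
    simp only [inner_neg_left, inner_sub_left, inner_sub_right, real_inner_smul_left]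
    rw [real_inner_comm y w, real_inner_comm z w, real_inner_comm y z]
    ring
  rw [hsplit] at h
  rw [hinner]
  linear_combination h

theorem linearized_prox_step_le {E : Type*} [AddCommGroup E] [Module ℝ E] {f : E → F → ℝ}
    (hf : ConvexOn ℝ univ fun q : E × F => f q.1 q.2) {γ : F} {x₁ : E} {y₁ : F}
    (hγ : ∀ w, g y + ⟪-γ, w - y⟫ ≤ g w)
    (hmin : ∀ x' y', f x₁ y₁ + g y + ⟪γ, y - y₁⟫ + 1 / (2 * ρ) * ‖y - y₁‖ ^ 2 ≤
      f x' y' + g y + ⟪γ, y - y'⟫ + 1 / (2 * ρ) * ‖y - y'‖ ^ 2)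
    (hdesc : f x₁ y₁ + g y₁ ≤ f x₁ y₁ + g y + ⟪γ, y - y₁⟫ + 1 / (2 * ρ) * ‖y - y₁‖ ^ 2)
    (xs : E) (ys : F) :
    f x₁ y₁ + g y₁ + 1 / (2 * ρ) * ‖y₁ - ys‖ ^ 2 ≤ f xs ys + g ys + 1 / (2 * ρ) * ‖y - ys‖ ^ 2 := by
  have hψ : ConvexOn ℝ univ fun q : E × F => f q.1 q.2 - ⟪γ, q.2⟫ :=
    hf.sub (((innerₛₗ ℝ γ).comp (LinearMap.snd ℝ E F)).concaveOn convex_univ)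
  have h := hψ.three_point (LinearMap.snd ℝ E F) y (1 / (2 * ρ)) (p := (x₁, y₁))
    (fun q => by
      have := hmin q.1 q.2
      simp only [LinearMap.snd_apply, inner_sub_right, norm_sub_rev y] at this ⊢
      linarith) (xs, ys)
  have hsub := hγ ys
  simp only [LinearMap.snd_apply, norm_sub_rev _ y, norm_sub_rev ys] at h
  simp only [inner_neg_left, inner_sub_right] at hsub hdesc
  linarith

variable [CompleteSpace F]

theorem le_add_inner_add_sq_of_lipschitz_gradient {ψ : F → ℝ} {G : F → F}
    (hψ : ∀ v, HasGradientAt ψ (G v) v) {L : ℝ} (hG : ∀ u v, ‖G u - G v‖ ≤ L * ‖u - v‖)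
    (u w : F) : ψ w ≤ ψ u + ⟪G u, w - u⟫ + L / 2 * ‖w - u‖ ^ 2 := by
  set d := w - u
  set h : ℝ → ℝ := fun t => ψ (u + t • d) - t * ⟪G u, d⟫ - L / 2 * t ^ 2 * ‖d‖ ^ 2
  have hderiv : ∀ t, HasDerivAt h (⟪G (u + t • d), d⟫ - ⟪G u, d⟫ - L * t * ‖d‖ ^ 2) t := by
    intro t
    have hline : HasDerivAt (fun s : ℝ => u + s • d) d t := by
      simpa using ((hasDerivAt_id t).smul_const d).const_add u
    have hψt := (hψ (u + t • d)).hasFDerivAt.comp_hasDerivAt t hline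
    exact ((hψt.sub ((hasDerivAt_id t).mul_const ⟪G u, d⟫)).sub
      (((hasDerivAt_pow 2 t).const_mul (L / 2)).mul_const (‖d‖ ^ 2))).congr_deriv
      (by rw [InnerProductSpace.toDual_apply_apply]; push_cast; ring)
  have hanti : AntitoneOn h (Icc 0 1) := by
    refine antitoneOn_of_hasDerivWithinAt_nonpos (convex_Icc 0 1)
      (continuous_iff_continuousAt.2 fun t => (hderiv t).continuousAt).continuousOn
      (fun t _ => (hderiv t).hasDerivWithinAt) fun t ht => ?_
    rw [interior_Icc] at ht
    have hlip : ‖G (u + t • d) - G u‖ ≤ L * (t * ‖d‖) := by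
      simpa [norm_smul, abs_of_pos ht.1] using hG (u + t • d) u
    calc ⟪G (u + t • d), d⟫ - ⟪G u, d⟫ - L * t * ‖d‖ ^ 2
        = ⟪G (u + t • d) - G u, d⟫ - L * t * ‖d‖ ^ 2 := by rw [inner_sub_left]
      _ ≤ ‖G (u + t • d) - G u‖ * ‖d‖ - L * t * ‖d‖ ^ 2 := by gcongr; exact real_inner_le_norm _ _
      _ ≤ L * (t * ‖d‖) * ‖d‖ - L * t * ‖d‖ ^ 2 := by gcongr
      _ = 0 := by ring
  have h10 := hanti (left_mem_Icc.2 zero_le_one) (right_mem_Icc.2 zero_le_one) zero_le_one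
  simp only [h, d, one_smul, zero_smul, add_zero, add_sub_cancel, one_mul, one_pow, mul_one,
    zero_mul, sub_zero, ne_eq, OfNat.ofNat_ne_zero, not_false_eq_true, zero_pow, mul_zero] at h10
  linarith

theorem prox_grad_three_point (hg : ConvexOn ℝ univ g) {φ : F → ℝ} {G : F → F}
    (hφ : ∀ v, HasGradientAt φ (G v) v) {L : ℝ} (hG : ∀ u v, ‖G u - G v‖ ≤ L * ‖u - v‖)
    (hρ : 0 < ρ) (hρL : ρ * L ≤ 1)
    (hz : ∀ w, ⟪G y, z - y⟫ + 1 / (2 * ρ) * ‖z - y‖ ^ 2 + g z ≤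
      ⟪G y, w - y⟫ + 1 / (2 * ρ) * ‖w - y‖ ^ 2 + g w) (w : F) :
    φ z + g z + 1 / (2 * ρ) * ‖w - z‖ ^ 2 ≤
      φ y + ⟪G y, w - y⟫ + g w + 1 / (2 * ρ) * ‖w - y‖ ^ 2 := by
  have hL : L / 2 ≤ 1 / (2 * ρ) := by
    rw [div_le_div_iff₀ two_pos (by positivity)]; linarith
  have hdesc := le_add_inner_add_sq_of_lipschitz_gradient hφ hG y z
  have := prox_three_point hg hz w
  nlinarith [mul_le_mul_of_nonneg_right hL (sq_nonneg ‖z - y‖)]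

end InnerProductSpace

theorem ConvexOn.add_inner_le_of_min_fst {E F : Type*} [NormedAddCommGroup E] [NormedSpace ℝ E]
    [NormedAddCommGroup F] [InnerProductSpace ℝ F] [CompleteSpace F] {f : E × F → ℝ}
    (hf : ConvexOn ℝ univ f) {x : E} {y : F} (hfd : DifferentiableAt ℝ f (x, y)) {gy : F}
    (hgy : HasGradientAt (fun y' => f (x, y')) gy y) (hmin : ∀ x', f (x, y) ≤ f (x', y))
    (q : E × F) : f (x, y) + ⟪gy, q.2 - y⟫ ≤ f q := by
  set D := fderiv ℝ f (x, y)
  have hD : HasFDerivAt f D (x, y) := hfd.hasFDerivAt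
  have hxmin : IsLocalMin (fun x' => f (x', y)) x := Eventually.of_forall hmin
  have hDx : D.comp (.inl ℝ E F) = 0 :=
    hxmin.hasFDerivAt_eq_zero (hD.comp x (hasFDerivAt_prodMk_left x y))
  have hDy : D.comp (.inr ℝ E F) = InnerProductSpace.toDual ℝ F gy :=
    (hD.comp y (hasFDerivAt_prodMk_right x y)).unique hgy.hasFDerivAt
  have hDq : D (q - (x, y)) = ⟪gy, q.2 - y⟫ := by
    rw [← D.coprod_comp_inl_inr, hDx, hDy]
    simp [InnerProductSpace.toDual_apply_apply]
  simpa [hDq] using hf.add_fderiv_sub_le hD q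

section APLMS

variable {E F : Type*} [NormedAddCommGroup F] [InnerProductSpace ℝ F]

/-- One iteration of APLM-S, from `(yb, γ)` to `(x₁, y₁)` and then `z` (the next `ȳ`), with
`gy` the partial gradient `∇_y f`. -/
structure IsAPLMSStep (f : E → F → ℝ) (g : F → ℝ) (gy : E → F → F) (ρ : ℝ) (skip : Prop)
    (yb γ : F) (x₁ : E) (y₁ z : F) : Prop where
  regular : ¬ skip →
    (∀ x' y', f x₁ y₁ + g yb + ⟪γ, yb - y₁⟫ + 1 / (2 * ρ) * ‖yb - y₁‖ ^ 2 ≤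
      f x' y' + g yb + ⟪γ, yb - y'⟫ + 1 / (2 * ρ) * ‖yb - y'‖ ^ 2) ∧
    f x₁ y₁ + g y₁ ≤ f x₁ y₁ + g yb + ⟪γ, yb - y₁⟫ + 1 / (2 * ρ) * ‖yb - y₁‖ ^ 2
  skipping : skip → y₁ = yb ∧ ∀ x', f x₁ y₁ ≤ f x' y₁
  prox : ∀ w, ⟪gy x₁ y₁, z - y₁⟫ + 1 / (2 * ρ) * ‖z - y₁‖ ^ 2 + g z ≤
    ⟪gy x₁ y₁, w - y₁⟫ + 1 / (2 * ρ) * ‖w - y₁‖ ^ 2 + g w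

namespace IsAPLMSStep

variable {f : E → F → ℝ} {g : F → ℝ} {gy : E → F → F} {ρ L : ℝ} {skip : Prop} {yb γ : F}
  {x₁ : E} {y₁ z : F}

theorem min_fst (h : IsAPLMSStep f g gy ρ skip yb γ x₁ y₁ z) (x' : E) : f x₁ y₁ ≤ f x' y₁ := by
  by_cases hs : skip
  · exact (h.skipping hs).2 x'
  · simpa using (h.regular hs).1 x' y₁

theorem objective_le (h : IsAPLMSStep f g gy ρ skip yb γ x₁ y₁ z) (x' : E) :
    f x₁ y₁ + g y₁ ≤ f x' yb + g yb := by
  by_cases hs : skip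
  · have := h.min_fst x'
    rw [(h.skipping hs).1] at this ⊢
    linarith
  · simpa using (h.regular hs).2.trans ((h.regular hs).1 x' yb)

theorem subgradient (h : IsAPLMSStep f g gy ρ skip yb γ x₁ y₁ z) (hg : ConvexOn ℝ univ g)
    (w : F) : g z + ⟪-(gy x₁ y₁ - (1 / ρ) • (y₁ - z)), w - z⟫ ≤ g w :=
  prox_subgradient hg h.prox w

variable [CompleteSpace F]

theorem descent (h : IsAPLMSStep f g gy ρ skip yb γ x₁ y₁ z) (hg : ConvexOn ℝ univ g)
    (hgy : ∀ y, HasGradientAt (f x₁) (gy x₁ y) y)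
    (hLip : ∀ y y', ‖gy x₁ y - gy x₁ y'‖ ≤ L * ‖y - y'‖) (hρ : 0 < ρ) (hρL : ρ * L ≤ 1) :
    f x₁ z + g z ≤ f x₁ y₁ + g y₁ := by
  have hz := prox_grad_three_point hg hgy hLip hρ hρL h.prox y₁
  have hsq : 0 ≤ 1 / (2 * ρ) * ‖y₁ - z‖ ^ 2 := by positivity
  simp only [sub_self, inner_zero_right, norm_zero] at hz
  linarith

theorem progress [NormedAddCommGroup E] [NormedSpace ℝ E]
    (h : IsAPLMSStep f g gy ρ skip yb γ x₁ y₁ z)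
    (hf : ConvexOn ℝ univ fun q : E × F => f q.1 q.2)
    (hfd : DifferentiableAt ℝ (fun q : E × F => f q.1 q.2) (x₁, y₁)) (hg : ConvexOn ℝ univ g)
    (hgy : ∀ y, HasGradientAt (f x₁) (gy x₁ y) y)
    (hLip : ∀ y y', ‖gy x₁ y - gy x₁ y'‖ ≤ L * ‖y - y'‖) (hρ : 0 < ρ) (hρL : ρ * L ≤ 1)
    (xs : E) (ys : F) :
    f x₁ z + g z + 1 / (2 * ρ) * ‖z - ys‖ ^ 2 ≤ f xs ys + g ys + 1 / (2 * ρ) * ‖y₁ - ys‖ ^ 2 := by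
  have hlin := hf.add_inner_le_of_min_fst hfd (hgy y₁) h.min_fst (xs, ys)
  have hz := prox_grad_three_point hg hgy hLip hρ hρL h.prox ys
  rw [norm_sub_rev ys, norm_sub_rev ys] at hz
  linarith

theorem weighted_gap_le [NormedAddCommGroup E] [NormedSpace ℝ E] [Decidable skip]
    (h : IsAPLMSStep f g gy ρ skip yb γ x₁ y₁ z)
    (hf : ConvexOn ℝ univ fun q : E × F => f q.1 q.2)
    (hfd : DifferentiableAt ℝ (fun q : E × F => f q.1 q.2) (x₁, y₁)) (hg : ConvexOn ℝ univ g)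
    (hgy : ∀ y, HasGradientAt (f x₁) (gy x₁ y) y)
    (hLip : ∀ y y', ‖gy x₁ y - gy x₁ y'‖ ≤ L * ‖y - y'‖) (hρ : 0 < ρ) (hρL : ρ * L ≤ 1)
    (hγ : ∀ w, g yb + ⟪-γ, w - yb⟫ ≤ g w) (xs : E) (ys : F) :
    (if skip then (1 : ℝ) else 2) * (f x₁ z + g z - (f xs ys + g ys)) ≤
      1 / (2 * ρ) * ‖yb - ys‖ ^ 2 - 1 / (2 * ρ) * ‖z - ys‖ ^ 2 := by
  have hprogress := h.progress hf hfd hg hgy hLip hρ hρL xs ys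
  split_ifs with hs
  · rw [(h.skipping hs).1] at hprogress
    linarith
  · have hregular := linearized_prox_step_le hf hγ (h.regular hs).1 (h.regular hs).2 xs ys
    linarith [h.descent hg hgy hLip hρ hρL]

end IsAPLMSStep

end APLMS

theorem sub_mul_sum_le_of_telescope {Φ a w : ℕ → ℝ} {r : ℝ}
    (hstep : ∀ j, w j * (Φ (j + 1) - r) ≤ a j - a (j + 1)) (hw : ∀ j, 0 ≤ w j)
    (hΦ : Antitone fun j => Φ (j + 1)) {k : ℕ} (ha : 0 ≤ a k) :
    (Φ k - r) * ∑ j ∈ range k, w j ≤ a 0 := by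
  calc (Φ k - r) * ∑ j ∈ range k, w j
      ≤ ∑ j ∈ range k, w j * (Φ (j + 1) - r) := by
        rw [mul_sum]
        refine sum_le_sum fun j hj => ?_
        obtain ⟨n, rfl⟩ := Nat.exists_eq_add_one_of_ne_zero (Nat.ne_zero_of_lt (mem_range.1 hj))
        nlinarith [hw j, hΦ (Nat.lt_succ_iff.1 (mem_range.1 hj))]
    _ ≤ ∑ j ∈ range k, (a j - a (j + 1)) := sum_le_sum fun j _ => hstep j
    _ = a 0 - a k := sum_range_sub' a k
    _ ≤ a 0 := by linarith

theorem sum_range_ite_one_two (S : ℕ → Prop) [DecidablePred S] (k : ℕ) :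
    ∑ j ∈ range k, (if S j then (1 : ℝ) else 2) = k + Nat.card {n // n < k ∧ ¬ S n} := by
  have hcard : Nat.card {n // n < k ∧ ¬ S n} = #{n ∈ range k | ¬ S n} := by
    rw [← Nat.card_eq_finsetCard]
    exact Nat.card_congr (Equiv.subtypeEquivRight fun n => by simp)
  have hweight : ∀ j, (if S j then (1 : ℝ) else 2) = 1 + if ¬ S j then 1 else 0 := by
    intro j; split_ifs <;> norm_num
  simp only [hweight, sum_add_distrib, sum_boole, hcard, sum_const, card_range, nsmul_one]

theorem stmt11_general (m M : ℕ)
    (f : EuclideanSpace ℝ (Fin m) → EuclideanSpace ℝ (Fin M) → ℝ)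
    (g : EuclideanSpace ℝ (Fin M) → ℝ)
    (gy : EuclideanSpace ℝ (Fin m) → EuclideanSpace ℝ (Fin M) → EuclideanSpace ℝ (Fin M))
    (hf : ConvexOn ℝ Set.univ (fun q : EuclideanSpace ℝ (Fin m) × EuclideanSpace ℝ (Fin M) => f q.1 q.2))
    (hfd : Differentiable ℝ (fun q : EuclideanSpace ℝ (Fin m) × EuclideanSpace ℝ (Fin M) => f q.1 q.2))
    (hg : ConvexOn ℝ Set.univ g)
    (hgy : ∀ x y, HasGradientAt (fun y' => f x y') (gy x y) y)
    (L : ℝ) (hL : 0 < L)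
    (hLip : ∀ x y z, ‖gy x y - gy x z‖ ≤ L * ‖y - z‖)
    (ρ : ℝ) (hρ : 0 < ρ) (hρL : ρ ≤ 1 / L)
    (x : ℕ → EuclideanSpace ℝ (Fin m))
    (y yb γ : ℕ → EuclideanSpace ℝ (Fin M))
    (S : ℕ → Prop)  -- `S k` holds iff iteration `k` is a skipping iteration
    (hγ0 : ∀ w, g (yb 0) + ⟪-γ 0, w - yb 0⟫ ≤ g w)
    (hreg : ∀ k, ¬ S k →
      (∀ (x' : EuclideanSpace ℝ (Fin m)) (y' : EuclideanSpace ℝ (Fin M)),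
        f (x (k + 1)) (y (k + 1)) + g (yb k) + ⟪γ k, yb k - y (k + 1)⟫
            + (1 / (2 * ρ)) * ‖yb k - y (k + 1)‖ ^ 2 ≤
          f x' y' + g (yb k) + ⟪γ k, yb k - y'⟫ + (1 / (2 * ρ)) * ‖yb k - y'‖ ^ 2) ∧
      f (x (k + 1)) (y (k + 1)) + g (y (k + 1)) ≤
        f (x (k + 1)) (y (k + 1)) + g (yb k) + ⟪γ k, yb k - y (k + 1)⟫
          + (1 / (2 * ρ)) * ‖yb k - y (k + 1)‖ ^ 2)
    (hskip : ∀ k, S k → y (k + 1) = yb k ∧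
      ∀ x', f (x (k + 1)) (y (k + 1)) ≤ f x' (y (k + 1)))
    (hyb : ∀ k w,
      ⟪gy (x (k + 1)) (y (k + 1)), yb (k + 1) - y (k + 1)⟫
          + (1 / (2 * ρ)) * ‖yb (k + 1) - y (k + 1)‖ ^ 2 + g (yb (k + 1)) ≤
        ⟪gy (x (k + 1)) (y (k + 1)), w - y (k + 1)⟫
          + (1 / (2 * ρ)) * ‖w - y (k + 1)‖ ^ 2 + g w)
    (hγrec : ∀ k, γ (k + 1) =
      gy (x (k + 1)) (y (k + 1)) - (1 / ρ) • (y (k + 1) - yb (k + 1)))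
    (xs : EuclideanSpace ℝ (Fin m)) (ys : EuclideanSpace ℝ (Fin M)) :
    ∀ k : ℕ, 1 ≤ k →
      (f (x k) (yb k) + g (yb k)) - (f xs ys + g ys) ≤
        ‖yb 0 - ys‖ ^ 2 /
          (2 * ρ * ((k : ℝ) + (Nat.card {n : ℕ // n < k ∧ ¬ S n} : ℝ))) := by
  classical
  have hρL' : ρ * L ≤ 1 := (le_div_iff₀ hL).1 hρL
  have hstep : ∀ k, IsAPLMSStep f g gy ρ (S k) (yb k) (γ k) (x (k + 1)) (y (k + 1)) (yb (k + 1)) :=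
    fun k => ⟨hreg k, hskip k, hyb k⟩
  have hsub : ∀ k w, g (yb k) + ⟪-γ k, w - yb k⟫ ≤ g w := by
    rintro (_ | k) w
    · exact hγ0 w
    · rw [hγrec]
      exact (hstep k).subgradient hg w
  have hmono : Antitone fun k => f (x (k + 1)) (yb (k + 1)) + g (yb (k + 1)) :=
    antitone_nat_of_succ_le fun k => ((hstep (k + 1)).descent hg (hgy _) (hLip _) hρ hρL').trans
      ((hstep (k + 1)).objective_le (x (k + 1)))
  intro k hk
  have key : (f (x k) (yb k) + g (yb k) - (f xs ys + g ys)) *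
      ∑ j ∈ range k, (if S j then (1 : ℝ) else 2) ≤ 1 / (2 * ρ) * ‖yb 0 - ys‖ ^ 2 :=
    sub_mul_sum_le_of_telescope (Φ := fun k => f (x k) (yb k) + g (yb k))
      (a := fun j => 1 / (2 * ρ) * ‖yb j - ys‖ ^ 2) (w := fun j => if S j then 1 else 2)
      (fun j => (hstep j).weighted_gap_le hf (hfd _) hg (hgy _) (hLip _) hρ hρL' (hsub j) xs ys)
      (fun j => by positivity) hmono (by positivity)
  rw [sum_range_ite_one_two] at key
  rw [le_div_iff₀ (by positivity)]
  calc _ = 2 * ρ * ((f (x k) (yb k) + g (yb k) - (f xs ys + g ys)) *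
        (k + Nat.card {n // n < k ∧ ¬ S n})) := by ring
    _ ≤ 2 * ρ * (1 / (2 * ρ) * ‖yb 0 - ys‖ ^ 2) := by gcongr
    _ = ‖yb 0 - ys‖ ^ 2 := by field_simp

/-- Theorem 3.1: convergence rate of APLM-S.  With `ρ ≤ 1/L_y(f)`, after `k`
iterations of which `k_n` are regular (non-skipping), the iterates satisfy
`F(x^k, ȳ^k) - F(x*, y*) ≤ ‖ȳ^0 - y*‖²/(2ρ(k + k_n))`. -/
theorem stmt11 (m M : ℕ)
    (f : EuclideanSpace ℝ (Fin m) → EuclideanSpace ℝ (Fin M) → ℝ)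
    (g : EuclideanSpace ℝ (Fin M) → ℝ)
    (gy : EuclideanSpace ℝ (Fin m) → EuclideanSpace ℝ (Fin M) → EuclideanSpace ℝ (Fin M))
    (hf : ConvexOn ℝ Set.univ (fun q : EuclideanSpace ℝ (Fin m) × EuclideanSpace ℝ (Fin M) => f q.1 q.2))
    (hfd : Differentiable ℝ (fun q : EuclideanSpace ℝ (Fin m) × EuclideanSpace ℝ (Fin M) => f q.1 q.2))
    (hg : ConvexOn ℝ Set.univ g)
    (hgy : ∀ x y, HasGradientAt (fun y' => f x y') (gy x y) y)
    (L : ℝ) (hL : 0 < L)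
    (hLip : ∀ x y z, ‖gy x y - gy x z‖ ≤ L * ‖y - z‖)
    (ρ : ℝ) (hρ : 0 < ρ) (hρL : ρ ≤ 1 / L)
    (x : ℕ → EuclideanSpace ℝ (Fin m))
    (y yb γ : ℕ → EuclideanSpace ℝ (Fin M))
    (S : ℕ → Prop)  -- `S k` holds iff iteration `k` is a skipping iteration
    (hγ0 : ∀ w, g (yb 0) + ⟪-γ 0, w - yb 0⟫ ≤ g w)
    (hreg : ∀ k, ¬ S k →
      (∀ (x' : EuclideanSpace ℝ (Fin m)) (y' : EuclideanSpace ℝ (Fin M)),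
        f (x (k + 1)) (y (k + 1)) + g (yb k) + ⟪γ k, yb k - y (k + 1)⟫
            + (1 / (2 * ρ)) * ‖yb k - y (k + 1)‖ ^ 2 ≤
          f x' y' + g (yb k) + ⟪γ k, yb k - y'⟫ + (1 / (2 * ρ)) * ‖yb k - y'‖ ^ 2) ∧
      f (x (k + 1)) (y (k + 1)) + g (y (k + 1)) ≤
        f (x (k + 1)) (y (k + 1)) + g (yb k) + ⟪γ k, yb k - y (k + 1)⟫
          + (1 / (2 * ρ)) * ‖yb k - y (k + 1)‖ ^ 2)
    (hskip : ∀ k, S k → y (k + 1) = yb k ∧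
      ∀ x', f (x (k + 1)) (y (k + 1)) ≤ f x' (y (k + 1)))
    (hyb : ∀ k w,
      ⟪gy (x (k + 1)) (y (k + 1)), yb (k + 1) - y (k + 1)⟫
          + (1 / (2 * ρ)) * ‖yb (k + 1) - y (k + 1)‖ ^ 2 + g (yb (k + 1)) ≤
        ⟪gy (x (k + 1)) (y (k + 1)), w - y (k + 1)⟫
          + (1 / (2 * ρ)) * ‖w - y (k + 1)‖ ^ 2 + g w)
    (hγrec : ∀ k, γ (k + 1) =
      gy (x (k + 1)) (y (k + 1)) - (1 / ρ) • (y (k + 1) - yb (k + 1)))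
    (xs : EuclideanSpace ℝ (Fin m)) (ys : EuclideanSpace ℝ (Fin M))
    (hmin : ∀ x' y', f xs ys + g ys ≤ f x' y' + g y') :
    ∀ k : ℕ, 1 ≤ k →
      (f (x k) (yb k) + g (yb k)) - (f xs ys + g ys) ≤
        ‖yb 0 - ys‖ ^ 2 /
          (2 * ρ * ((k : ℝ) + (Nat.card {n : ℕ // n < k ∧ ¬ S n} : ℝ))) :=
  stmt11_general m M f g gy hf hfd hg hgy L hL hLip ρ hρ hρL x y yb γ S hγ0 hreg hskip hyb hγrec xs
    ys
end
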